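/- arXiv:math/0610383 — 7 statements merged into one kernel-verified Lean document; each statement's English description precedes it below -/
import Mathlib

section
/- For each i = 1,…,N define the KZ operator D_i, acting on W-valued functions on an open set U ⊆ C_N, by (D_iψ)(z) = ∂ψ/∂z_i(z) − m Σ_{j≠i} (s_{ij}+1)ψ(z)/(z_i−z_j). Then the KZ operators commute: for every twice continuously differentiable function ψ : U → W and all i, j one has D_i(D_jψ) = D_j(D_iψ) on U. -/
open scoped BigOperators

noncomputable section

/-- The configuration space `C_N = {z ∈ ℂ^N : z_i ≠ z_j for i ≠ j}`. -/
def Cconf (N : ℕ) : Set (Fin N → ℂ) := {z | ∀ i j : Fin N, i ≠ j → z i ≠ z j}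

/-- `ψ` is a solution of the KZ equation on `U` with values in a space with
`S_N`-action `act` and parameter `m`:  `ψ` is differentiable on `U` and
`∂ψ/∂z_i(z) = m Σ_{j≠i} (s_{ij}+1)ψ(z)/(z_i−z_j)` for all `i` and `z ∈ U`. -/
def IsKZSol {N : ℕ} {W : Type*} [NormedAddCommGroup W] [NormedSpace ℂ W]
    (act : Equiv.Perm (Fin N) → W → W) (m : ℂ) (U : Set (Fin N → ℂ))
    (ψ : (Fin N → ℂ) → W) : Prop :=
  DifferentiableOn ℂ ψ U ∧
  ∀ z ∈ U, ∀ i : Fin N,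
    fderiv ℂ ψ z (Pi.single i 1) =
      m • ∑ j ∈ Finset.univ.filter (fun j => j ≠ i),
        (z i - z j)⁻¹ • (act (Equiv.swap i j) (ψ z) + ψ z)

/-- The `i`-th KZ operator `D_i`, acting on `W`-valued functions:
`(D_iψ)(z) = ∂ψ/∂z_i(z) − m Σ_{j≠i} (s_{ij}+1)ψ(z)/(z_i−z_j)`. -/
def KZop {N : ℕ} {W : Type*} [NormedAddCommGroup W] [NormedSpace ℂ W]
    (act : Equiv.Perm (Fin N) → W → W) (m : ℂ) (i : Fin N)
    (ψ : (Fin N → ℂ) → W) : (Fin N → ℂ) → W :=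
  fun z =>
    fderiv ℂ ψ z (Pi.single i 1) -
      m • ∑ j ∈ Finset.univ.filter (fun j => j ≠ i),
        (z i - z j)⁻¹ • (act (Equiv.swap i j) (ψ z) + ψ z)

/-!
Write `D_i = ∂_i - A_i` with the operator-valued connection
`A_i(z) = m Σ_{k≠i} (s_{ik}+1)/(z_i-z_k)`. By symmetry of second derivatives,
`[D_i, D_j] = -(∂_i A_j - ∂_j A_i) + [A_i, A_j]` on `C²` functions. The curvature term vanishes
since `∂_i A_j = m (s_{ij}+1)/(z_i-z_j)²` is symmetric in `i, j`. In `[A_i, A_j]` the scalar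
parts drop out and disjoint transpositions commute; for each `t ∉ {i, j}` the three remaining
commutators equal `±(σ - σ⁻¹)` for the 3-cycle `σ = (i j)(j t)`, and their coefficients cancel
by `1/(ab) = 1/(a(a+b)) + 1/(b(a+b))`.
-/

open Equiv Finset

section CovariantDerivative

variable {𝕜 E W : Type*} [RCLike 𝕜] [NormedAddCommGroup E] [NormedSpace 𝕜 E]
  [NormedAddCommGroup W] [NormedSpace 𝕜 W]

def covDeriv (A : E → W →L[𝕜] W) (u : E) (ψ : E → W) : E → W :=
  fun z => fderiv 𝕜 ψ z u - A z (ψ z)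

variable {A B : E → W →L[𝕜] W} {ψ : E → W} {z : E}

theorem covDeriv_covDeriv_apply (u v : E) (hψ : ContDiffAt 𝕜 2 ψ z)
    (hB : DifferentiableAt 𝕜 B z) :
    covDeriv A u (covDeriv B v ψ) z =
      fderiv 𝕜 (fderiv 𝕜 ψ) z u v - fderiv 𝕜 B z u (ψ z) - B z (fderiv 𝕜 ψ z u)
        - A z (fderiv 𝕜 ψ z v - B z (ψ z)) := by
  have hψ₁ : DifferentiableAt 𝕜 ψ z := hψ.differentiableAt two_ne_zero
  have hψ₂ : DifferentiableAt 𝕜 (fderiv 𝕜 ψ) z :=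
    (hψ.fderiv_right (m := 1) le_rfl).differentiableAt one_ne_zero
  have hderiv : fderiv 𝕜 (covDeriv B v ψ) z =
      fderiv 𝕜 (fun w => fderiv 𝕜 ψ w v) z - fderiv 𝕜 (fun w => B w (ψ w)) z :=
    fderiv_sub (hψ₂.clm_apply (differentiableAt_const v)) (hB.clm_apply hψ₁)
  rw [covDeriv, hderiv, fderiv_clm_apply hψ₂ (differentiableAt_const v),
    fderiv_clm_apply hB hψ₁]
  simp only [fderiv_fun_const, Pi.zero_apply, ContinuousLinearMap.comp_zero, zero_add, sub_apply,
    ContinuousLinearMap.flip_apply, add_apply, ContinuousLinearMap.comp_apply, covDeriv]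
  abel

theorem covDeriv_comm {u v : E} (hψ : ContDiffAt 𝕜 2 ψ z) (hA : DifferentiableAt 𝕜 A z)
    (hB : DifferentiableAt 𝕜 B z) (hcurv : fderiv 𝕜 A z v = fderiv 𝕜 B z u)
    (hcomm : Commute (A z) (B z)) :
    covDeriv A u (covDeriv B v ψ) z = covDeriv B v (covDeriv A u ψ) z := by
  have hAB : A z (B z (ψ z)) = B z (A z (ψ z)) := congrArg (· (ψ z)) hcomm.eq
  rw [covDeriv_covDeriv_apply u v hψ hB, covDeriv_covDeriv_apply v u hψ hA,
    hψ.isSymmSndFDerivAt (by simp) u v, hcurv, map_sub, map_sub, hAB]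
  abel

end CovariantDerivative

theorem sum_sum_filter_ne_eq {α M : Type*} [Fintype α] [DecidableEq α] [AddCommMonoid M]
    {i j : α} (hij : i ≠ j) (f : α → α → M) (hji : f j i = 0)
    (hoff : ∀ k l, k ≠ i → k ≠ j → l ≠ i → l ≠ j → k ≠ l → f k l = 0) :
    ∑ k ∈ univ.filter (· ≠ i), ∑ l ∈ univ.filter (· ≠ j), f k l =
      ∑ t ∈ univ.filter (fun t => t ≠ i ∧ t ≠ j), (f j t + f t i + f t t) := by
  set G := univ.filter (fun t => t ≠ i ∧ t ≠ j)
  have hiG : i ∉ G := by simp [G]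
  have hjG : j ∉ G := by simp [G]
  have hFi : univ.filter (· ≠ i) = insert j G := by
    ext t; simp only [G, mem_filter, mem_univ, true_and, mem_insert]; grind
  have hFj : univ.filter (· ≠ j) = insert i G := by
    ext t; simp only [G, mem_filter, mem_univ, true_and, mem_insert]; grind
  have hdiag : ∀ k ∈ G, ∑ l ∈ G, f k l = f k k := fun k hk =>
    sum_eq_single_of_mem k hk fun l hl hlk => by
      simp only [G, mem_filter] at hk hl
      exact hoff k l hk.2.1 hk.2.2 hl.2.1 hl.2.2 (Ne.symm hlk)
  rw [hFi, hFj, sum_insert hjG, sum_insert hiG, hji, zero_add]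
  simp only [sum_insert hiG]
  rw [sum_congr rfl fun k hk => congrArg (f k i + ·) (hdiag k hk), sum_add_distrib,
    sum_add_distrib, sum_add_distrib, add_assoc]

theorem swap_mul_swap_eq_of_ne {α : Type*} [DecidableEq α] {a b c : α}
    (hca : c ≠ a) (hcb : c ≠ b) :
    swap a b * swap b c = swap a c * swap a b := by
  rw [mul_swap_eq_swap_mul, swap_apply_right, swap_apply_of_ne_of_ne hca hcb]

section KZCommute

variable {K R α : Type*} [Field K] [Ring R] [Algebra K R] [DecidableEq α]
  (π : Perm α →* R) {z : α → K}

/-- The `(k, l)` term of the commutator `[Σ_k s_{ik}/(z_i - z_k), Σ_l s_{jl}/(z_j - z_l)]`. -/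
def swapCommutatorTerm (z : α → K) (i j k l : α) : R :=
  ((z i - z k)⁻¹ * (z j - z l)⁻¹) • (π (swap i k * swap j l) - π (swap j l * swap i k))

theorem swapCommutatorTerm_eq_zero {i j k l : α} (h : swap i k * swap j l = swap j l * swap i k) :
    swapCommutatorTerm π z i j k l = 0 := by
  simp only [swapCommutatorTerm, h, sub_self, smul_zero]

theorem swapCommutatorTerm_cycle (hz : Function.Injective z) {i j t : α} (hij : i ≠ j)
    (hti : t ≠ i) (htj : t ≠ j) :
    swapCommutatorTerm π z i j j t + swapCommutatorTerm π z i j t i +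
      swapCommutatorTerm π z i j t t = 0 := by
  -- all three commutators are `±(π σ - π σ⁻¹)` for the 3-cycle `σ = (i j)(j t)`
  have h₁ : swap i j * swap j t = swap i t * swap i j := swap_mul_swap_eq_of_ne hti htj
  have h₂ : swap i j * swap i t = swap j t * swap i j := by
    simpa only [swap_comm j i] using swap_mul_swap_eq_of_ne htj hti
  have h₃ : swap j t * swap i t = swap i j * swap j t := by
    simpa only [swap_comm t i, swap_comm j i] using swap_mul_swap_eq_of_ne hij hti.symm
  have h₄ : swap i t * swap j t = swap j t * swap i j := by
    rw [← h₂]; simpa only [swap_comm t j] using swap_mul_swap_eq_of_ne hij.symm htj.symm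
  have hscalar : (z i - z j)⁻¹ * (z j - z t)⁻¹ + (z i - z t)⁻¹ * (z j - z i)⁻¹ -
      (z i - z t)⁻¹ * (z j - z t)⁻¹ = 0 := by
    have := sub_ne_zero.2 (hz.ne hij)
    have := sub_ne_zero.2 (hz.ne hij.symm)
    have := sub_ne_zero.2 (hz.ne hti.symm)
    have := sub_ne_zero.2 (hz.ne htj.symm)
    field_simp
    ring
  rw [swapCommutatorTerm, swapCommutatorTerm, swapCommutatorTerm, swap_comm j i, ← h₁, h₂, h₃,
    h₄, ← neg_sub (π (swap i j * swap j t)), smul_neg, ← sub_eq_add_neg, ← add_smul, ← sub_smul,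
    hscalar, zero_smul]

variable [Fintype α]

theorem commute_sum_inv_sub_smul_swap (hz : Function.Injective z) (i j : α) :
    Commute (∑ k ∈ univ.filter (· ≠ i), (z i - z k)⁻¹ • π (swap i k))
      (∑ l ∈ univ.filter (· ≠ j), (z j - z l)⁻¹ • π (swap j l)) := by
  obtain rfl | hij := eq_or_ne i j
  · exact Commute.refl _
  have hexpand : (∑ k ∈ univ.filter (· ≠ i), (z i - z k)⁻¹ • π (swap i k)) *
        (∑ l ∈ univ.filter (· ≠ j), (z j - z l)⁻¹ • π (swap j l)) -
      (∑ l ∈ univ.filter (· ≠ j), (z j - z l)⁻¹ • π (swap j l)) *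
        (∑ k ∈ univ.filter (· ≠ i), (z i - z k)⁻¹ • π (swap i k)) =
      ∑ k ∈ univ.filter (· ≠ i), ∑ l ∈ univ.filter (· ≠ j), swapCommutatorTerm π z i j k l := by
    rw [sum_mul_sum, sum_mul_sum, sum_comm (s := univ.filter (· ≠ j)), ← sum_sub_distrib]
    refine sum_congr rfl fun k _ => ?_
    rw [← sum_sub_distrib]
    refine sum_congr rfl fun l _ => ?_
    simp only [swapCommutatorTerm, smul_mul_smul_comm, map_mul, mul_comm (z j - z l)⁻¹,
      smul_sub]
  have hdisjoint : ∀ k l, k ≠ i → k ≠ j → l ≠ i → l ≠ j → k ≠ l →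
      swapCommutatorTerm π z i j k l = 0 := fun k l hki hkj hli hlj hkl =>
    swapCommutatorTerm_eq_zero π (Perm.disjoint_swap_swap
      (by simp [*, Ne.symm hki, Ne.symm hli, Ne.symm hlj])).commute
  rw [Commute, SemiconjBy, ← sub_eq_zero, hexpand,
    sum_sum_filter_ne_eq hij _ (swapCommutatorTerm_eq_zero π (by rw [swap_comm])) hdisjoint]
  exact sum_eq_zero fun t ht =>
    swapCommutatorTerm_cycle π hz hij (mem_filter.1 ht).2.1 (mem_filter.1 ht).2.2

variable (m : K)

def kzConnection (i : α) (z : α → K) : R :=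
  m • ∑ k ∈ univ.filter (· ≠ i), (z i - z k)⁻¹ • (π (swap i k) + 1)

theorem commute_kzConnection (hz : Function.Injective z) (i j : α) :
    Commute (kzConnection π m i z) (kzConnection π m j z) := by
  have hsplit : ∀ a, kzConnection π m a z = m • (∑ k ∈ univ.filter (· ≠ a),
      (z a - z k)⁻¹ • π (swap a k) + (∑ k ∈ univ.filter (· ≠ a), (z a - z k)⁻¹) • 1) := by
    intro a
    simp only [kzConnection, smul_add, sum_add_distrib, sum_smul]
  rw [hsplit, hsplit]
  refine (Commute.add_left ?_ ?_).smul_left m |>.smul_right m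
  · exact ((commute_sum_inv_sub_smul_swap π hz i j).add_right
      ((Commute.one_right _).smul_right _))
  · exact (Commute.one_left _).smul_left _

end KZCommute

section InverseDifferences

variable {𝕜 α F : Type*} [NontriviallyNormedField 𝕜] [Fintype α] [NormedAddCommGroup F]
  [NormedSpace 𝕜 F]

theorem hasFDerivAt_sum_inv_sub_smul (C : α → F) {s : Finset α} {i : α} {z : α → 𝕜}
    (hs : ∀ k ∈ s, z i ≠ z k) :
    HasFDerivAt (fun w : α → 𝕜 => ∑ k ∈ s, (w i - w k)⁻¹ • C k)
      (∑ k ∈ s, ((-((z i - z k) ^ 2)⁻¹) • ((ContinuousLinearMap.proj i : (α → 𝕜) →L[𝕜] 𝕜) -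
        ContinuousLinearMap.proj k)).smulRight (C k)) z := by
  refine HasFDerivAt.fun_sum fun k hk => HasFDerivAt.smul_const ?_ (C k)
  have hsub : HasFDerivAt (fun w : α → 𝕜 => w i - w k)
      (ContinuousLinearMap.proj i - ContinuousLinearMap.proj k) z :=
    ((ContinuousLinearMap.proj i : (α → 𝕜) →L[𝕜] 𝕜) - ContinuousLinearMap.proj k).hasFDerivAt
  refine ((hasFDerivAt_inv (sub_ne_zero.2 (hs k hk))).comp z hsub).congr_fderiv ?_
  ext v
  simp only [smul_apply, ContinuousLinearMap.comp_apply, sub_apply,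
    ContinuousLinearMap.proj_apply, ContinuousLinearMap.toSpanSingleton_apply, smul_eq_mul]
  ring

end InverseDifferences

section KZConnection

variable {𝕜 R α : Type*} [NontriviallyNormedField 𝕜] [NormedRing R] [NormedAlgebra 𝕜 R]
  [Fintype α] [DecidableEq α] (π : Perm α →* R) (m : 𝕜) {z : α → 𝕜}

theorem hasFDerivAt_kzConnection (hz : Function.Injective z) (i : α) :
    HasFDerivAt (kzConnection π m i)
      (m • ∑ k ∈ univ.filter (· ≠ i), ((-((z i - z k) ^ 2)⁻¹) •
        ((ContinuousLinearMap.proj i : (α → 𝕜) →L[𝕜] 𝕜) -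
          ContinuousLinearMap.proj k)).smulRight (π (swap i k) + 1)) z :=
  (hasFDerivAt_sum_inv_sub_smul _ fun _ hk => hz.ne (mem_filter.1 hk).2.symm).const_smul m

theorem fderiv_kzConnection_single (hz : Function.Injective z) {i j : α} (hij : i ≠ j) :
    fderiv 𝕜 (kzConnection π m i) z (Pi.single j 1) =
      (m * ((z i - z j) ^ 2)⁻¹) • (π (swap i j) + 1) := by
  rw [(hasFDerivAt_kzConnection π m hz i).fderiv, smul_apply, _root_.sum_apply,
    sum_eq_single_of_mem j (by simpa using hij.symm) fun k _ hkj => by simp [hkj, hij]]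
  simp [hij, mul_smul]

end KZConnection

section KZOperator

variable {N : ℕ} {W : Type*} [NormedAddCommGroup W] [NormedSpace ℂ W] [FiniteDimensional ℂ W]

theorem KZop_eq_covDeriv (ρ : Representation ℂ (Perm (Fin N)) W) (m : ℂ) (i : Fin N)
    (ψ : (Fin N → ℂ) → W) :
    KZop (fun g w => ρ g w) m i ψ =
      covDeriv (kzConnection
        ((Module.End.toContinuousLinearMap (𝕜 := ℂ) W : Module.End ℂ W →* W →L[ℂ] W).comp ρ) m i)
        (Pi.single i 1) ψ := by
  funext z
  simp [KZop, covDeriv, kzConnection, _root_.sum_apply, Module.End.toContinuousLinearMap]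

end KZOperator

theorem stmt_2_general {N : ℕ} {W : Type*} [NormedAddCommGroup W]
    [NormedSpace ℂ W] [FiniteDimensional ℂ W]
    (ρ : Representation ℂ (Equiv.Perm (Fin N)) W) (m : ℂ)
    (U : Set (Fin N → ℂ)) (hUopen : IsOpen U) (hU : U ⊆ Cconf N)
    (ψ : (Fin N → ℂ) → W) (hψ : ContDiffOn ℂ 2 ψ U) :
    ∀ z ∈ U, ∀ i j : Fin N,
      KZop (fun g w => ρ g w) m i (KZop (fun g w => ρ g w) m j ψ) z =
        KZop (fun g w => ρ g w) m j (KZop (fun g w => ρ g w) m i ψ) z := by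
  intro z hz i j
  obtain rfl | hij := eq_or_ne i j
  · rfl
  have hzinj : Function.Injective z := fun a b hab => not_imp_not.1 (hU hz a b) hab
  simp only [KZop_eq_covDeriv]
  refine covDeriv_comm (hψ.contDiffAt (hUopen.mem_nhds hz))
    (hasFDerivAt_kzConnection _ m hzinj i).differentiableAt
    (hasFDerivAt_kzConnection _ m hzinj j).differentiableAt ?_
    (commute_kzConnection _ m hzinj i j)
  rw [fderiv_kzConnection_single _ m hzinj hij, fderiv_kzConnection_single _ m hzinj hij.symm,
    swap_comm, ← neg_sub, neg_sq]

/-- the KZ operators commute on twice continuously differentiable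
functions: `D_i(D_jψ) = D_j(D_iψ)` on `U`. -/
theorem stmt_2 {N : ℕ} (hN : 2 ≤ N) {W : Type*} [NormedAddCommGroup W]
    [NormedSpace ℂ W] [FiniteDimensional ℂ W]
    (ρ : Representation ℂ (Equiv.Perm (Fin N)) W) (m : ℂ)
    (U : Set (Fin N → ℂ)) (hUopen : IsOpen U) (hU : U ⊆ Cconf N)
    (ψ : (Fin N → ℂ) → W) (hψ : ContDiffOn ℂ 2 ψ U) :
    ∀ z ∈ U, ∀ i j : Fin N,
      KZop (fun g w => ρ g w) m i (KZop (fun g w => ρ g w) m j ψ) z =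
        KZop (fun g w => ρ g w) m j (KZop (fun g w => ρ g w) m i ψ) z :=
  stmt_2_general ρ m U hUopen hU ψ hψ
end
end

section
/- Let m be an integer and let ψ : U → W be a solution of the KZ equation with values in W and parameter m on an open set U ⊆ C_N. Equip W with the sign-twisted S_N-action (the tensor product with the alternating representation), in which the transposition (i j) acts by −s_{ij}. Then the function φ(z) = ∏_{1≤i<j≤N}(z_i−z_j)^{−2m} ψ(z) is a solution of the KZ equation with values in the sign-twisted module and parameter −m on U. -/
/-! The Vandermonde power `V = ∏_{i<j} (z_i - z_j)^k` has logarithmic derivative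
`∂_i V / V = k Σ_{j≠i} (z_i - z_j)⁻¹`. Hence for a KZ solution `ψ` with parameter `m`,
`∂_i (V ψ) = V Σ_{j≠i} (z_i - z_j)⁻¹ (m s_{ij} + m + k) ψ`, and for `k = -2m` the operator
`m s_{ij} - m` is `-m` times `-s_{ij} + 1`, the sign-twisted `s_{ij} + 1`. -/

noncomputable section

open Finset

theorem HasFDerivAt.finsetProd_of_ne_zero {𝕜 E ι : Type*} [NontriviallyNormedField 𝕜]
    [NormedAddCommGroup E] [NormedSpace 𝕜 E] [DecidableEq ι] {s : Finset ι} {f : ι → E → 𝕜}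
    {f' : ι → E →L[𝕜] 𝕜} {x : E} (hf : ∀ p ∈ s, HasFDerivAt (f p) (f' p) x)
    (hne : ∀ p ∈ s, f p x ≠ 0) :
    HasFDerivAt (fun y => ∏ p ∈ s, f p y) ((∏ p ∈ s, f p x) • ∑ p ∈ s, (f p x)⁻¹ • f' p) x := by
  refine (HasFDerivAt.finsetProd hf).congr_fderiv ?_
  rw [smul_sum]
  refine sum_congr rfl fun p hp => ?_
  rw [smul_smul, ← prod_erase_mul s _ hp, mul_inv_cancel_right₀ (hne p hp)]

section Vandermonde

variable {ι : Type*} [Fintype ι] [LinearOrder ι]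

theorem sum_filter_lt_mul_single_sub {R : Type*} [CommRing R] (h : ι → ι → R)
    (h_antisymm : ∀ a b, h b a = -h a b) (i : ι) :
    ∑ p ∈ univ.filter (fun p : ι × ι => p.1 < p.2),
        h p.1 p.2 * ((Pi.single i 1 : ι → R) p.1 - (Pi.single i 1 : ι → R) p.2) =
      ∑ j ∈ univ.filter (· ≠ i), h i j := by
  have hsplit : univ.filter (· ≠ i) = univ.filter (i < ·) ∪ univ.filter (· < i) := by
    ext j; simp only [mem_filter, mem_union, mem_univ, true_and, ne_iff_lt_or_gt, or_comm]
  rw [hsplit, sum_union (disjoint_filter.2 fun j _ h1 h2 => lt_asymm h1 h2)]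
  simp only [mul_sub, sum_sub_distrib, sum_filter, Fintype.sum_prod_type, Pi.single_apply,
    mul_ite, mul_one, mul_zero, ← ite_and]
  rw [sum_comm (s := univ) (t := univ) (f := fun a b => if a < b ∧ b = i then h a b else 0)]
  simp only [and_comm (a := _ < _), ite_and, sum_ite_irrel, sum_const_zero, sum_ite_eq',
    mem_univ, if_true, h_antisymm i]
  rw [sub_eq_add_neg, ← sum_neg_distrib]
  simp only [neg_ite, neg_neg, neg_zero]

def vandermondeZPow (k : ℤ) (z : ι → ℂ) : ℂ :=
  ∏ p ∈ univ.filter (fun p : ι × ι => p.1 < p.2), (z p.1 - z p.2) ^ k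

theorem hasFDerivAt_vandermondeZPow (k : ℤ) {z : ι → ℂ} (hz : Function.Injective z) :
    HasFDerivAt (vandermondeZPow k)
      (vandermondeZPow k z • (k : ℂ) • ∑ p ∈ univ.filter (fun p : ι × ι => p.1 < p.2),
        (z p.1 - z p.2)⁻¹ • ((ContinuousLinearMap.proj p.1 : (ι → ℂ) →L[ℂ] ℂ) -
          ContinuousLinearMap.proj p.2)) z := by
  have hne : ∀ p ∈ univ.filter (fun p : ι × ι => p.1 < p.2), z p.1 - z p.2 ≠ 0 := fun p hp =>
    sub_ne_zero.2 (hz.ne (mem_filter.1 hp).2.ne)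
  have hfactor : ∀ p ∈ univ.filter (fun p : ι × ι => p.1 < p.2),
      HasFDerivAt (fun w : ι → ℂ => (w p.1 - w p.2) ^ k)
        (((k : ℂ) * (z p.1 - z p.2) ^ (k - 1)) •
          ((ContinuousLinearMap.proj p.1 : (ι → ℂ) →L[ℂ] ℂ) - ContinuousLinearMap.proj p.2)) z :=
    fun p hp => (hasDerivAt_zpow k _ (.inl (hne p hp))).comp_hasFDerivAt
      (f := fun w : ι → ℂ => w p.1 - w p.2) z
      ((ContinuousLinearMap.proj p.1 : (ι → ℂ) →L[ℂ] ℂ) - ContinuousLinearMap.proj p.2).hasFDerivAt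
  refine (HasFDerivAt.finsetProd_of_ne_zero hfactor
    (fun p hp => zpow_ne_zero k (hne p hp))).congr_fderiv ?_
  rw [vandermondeZPow, smul_sum (r := (k : ℂ))]
  congr 1
  refine sum_congr rfl fun p hp => ?_
  rw [smul_smul, smul_smul, zpow_sub_one₀ (hne p hp)]
  congr 1
  field_simp [zpow_ne_zero k (hne p hp)]

theorem fderiv_vandermondeZPow_apply_single (k : ℤ) {z : ι → ℂ} (hz : Function.Injective z)
    (i : ι) :
    fderiv ℂ (vandermondeZPow k) z (Pi.single i 1) =
      k * vandermondeZPow k z * ∑ j ∈ univ.filter (· ≠ i), (z i - z j)⁻¹ := by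
  rw [(hasFDerivAt_vandermondeZPow k hz).fderiv, ← sum_filter_lt_mul_single_sub
    (fun a b => (z a - z b)⁻¹) (fun a b => by rw [← neg_sub, inv_neg]) i]
  simp only [smul_apply, _root_.sum_apply, sub_apply, ContinuousLinearMap.proj_apply, smul_eq_mul]
  ring

end Vandermonde

theorem stmt_3_general {N : ℕ} {W : Type*} [NormedAddCommGroup W]
    [NormedSpace ℂ W]
    (ρ : Representation ℂ (Equiv.Perm (Fin N)) W) (m : ℤ)
    (U : Set (Fin N → ℂ)) (hUopen : IsOpen U) (hU : U ⊆ Cconf N)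
    (ψ : (Fin N → ℂ) → W)
    (h : IsKZSol (fun g w => ρ g w) (m : ℂ) U ψ) :
    IsKZSol (fun g w => ((Equiv.Perm.sign g : ℤ) : ℂ) • ρ g w) (-(m : ℂ)) U
      (fun z =>
        (∏ p ∈ Finset.univ.filter (fun p : Fin N × Fin N => p.1 < p.2),
          (z p.1 - z p.2) ^ (-(2 * m))) • ψ z) := by
  change IsKZSol _ _ U fun z => vandermondeZPow (-(2 * m)) z • ψ z
  obtain ⟨hψ, hKZ⟩ := h
  have hinj : ∀ z ∈ U, Function.Injective z := fun z hz a b => not_imp_not.1 (hU hz a b)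
  have hψz : ∀ z ∈ U, DifferentiableAt ℂ ψ z := fun z hz =>
    hψ.differentiableAt (hUopen.mem_nhds hz)
  have hVz : ∀ z ∈ U, DifferentiableAt ℂ (vandermondeZPow (-(2 * m))) z := fun z hz =>
    (hasFDerivAt_vandermondeZPow _ (hinj z hz)).differentiableAt
  refine ⟨fun z hz => ((hVz z hz).smul (hψz z hz)).differentiableWithinAt, fun z hz i => ?_⟩
  rw [fderiv_fun_smul (hVz z hz) (hψz z hz), add_apply, smul_apply,
    ContinuousLinearMap.smulRight_apply,
    fderiv_vandermondeZPow_apply_single _ (hinj z hz), hKZ z hz i]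
  simp only [smul_sum, sum_smul, mul_sum, ← sum_add_distrib]
  refine sum_congr rfl fun j hj => ?_
  rw [Equiv.Perm.sign_swap (mem_filter.1 hj).2.symm, map_smul]
  push_cast
  module

/-- if `ψ` solves the KZ equation with values in `W` and integer
parameter `m`, then `φ(z) = ∏_{i<j}(z_i−z_j)^{−2m} ψ(z)` solves the KZ equation
with values in the sign-twisted module (where `(i j)` acts by `−s_{ij}`, i.e.
`g` acts by `sign(g)·ρ(g)`) and parameter `−m`. -/
theorem stmt_3 {N : ℕ} (hN : 2 ≤ N) {W : Type*} [NormedAddCommGroup W]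
    [NormedSpace ℂ W] [FiniteDimensional ℂ W]
    (ρ : Representation ℂ (Equiv.Perm (Fin N)) W) (m : ℤ)
    (U : Set (Fin N → ℂ)) (hUopen : IsOpen U) (hU : U ⊆ Cconf N)
    (ψ : (Fin N → ℂ) → W)
    (h : IsKZSol (fun g w => ρ g w) (m : ℂ) U ψ) :
    IsKZSol (fun g w => ((Equiv.Perm.sign g : ℤ) : ℂ) • ρ g w) (-(m : ℂ)) U
      (fun z =>
        (∏ p ∈ Finset.univ.filter (fun p : Fin N × Fin N => p.1 < p.2),
          (z p.1 - z p.2) ^ (-(2 * m))) • ψ z) :=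
  stmt_3_general ρ m U hUopen hU ψ h
end
end

section
/- Let U ⊆ C_N be a connected open set, let ψ : U → W be a solution of the KZ equation with values in W and parameter m, and let φ : U → W* be a solution of the KZ equation with values in the dual representation W* (where g ∈ S_N acts on ξ ∈ W* by (g·ξ)(w) = ξ(g^{-1}·w)) and parameter −m. Then the function z ↦ φ(z)(ψ(z)) is constant on U. -/
open scoped BigOperators

noncomputable section

/-!
The pairing `f z = φ z (ψ z)` has vanishing derivative: by the Leibniz rule
`∂ᵢ f = (∂ᵢ φ)(ψ) + φ(∂ᵢ ψ)`, and since a transposition is its own inverse, the dual action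
gives `(s_{ij} φ)(ψ) = φ(s_{ij} ψ)`, so the `(-m)`-terms coming from `φ` cancel the `m`-terms
coming from `ψ` summand by summand. A function with zero derivative on a connected open set is
constant.
-/

theorem ContinuousLinearMap.eq_zero_of_apply_single {ι 𝕜 M : Type*} [Fintype ι] [DecidableEq ι]
    [NontriviallyNormedField 𝕜] [NormedAddCommGroup M] [NormedSpace 𝕜 M]
    (L : (ι → 𝕜) →L[𝕜] M) (hL : ∀ i, L (Pi.single i 1) = 0) : L = 0 := by
  refine ContinuousLinearMap.coe_injective (LinearMap.pi_ext fun i x => ?_)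
  have hsingle : Pi.single i x = x • (Pi.single i 1 : ι → 𝕜) := by simp [← Pi.single_smul']
  simp [hsingle, hL i]

section KZPairing

variable {N : ℕ} {W : Type*} [NormedAddCommGroup W] [NormedSpace ℂ W]
  {act : Equiv.Perm (Fin N) → W → W} {act' : Equiv.Perm (Fin N) → (W →L[ℂ] ℂ) → (W →L[ℂ] ℂ)}
  {m : ℂ} {U : Set (Fin N → ℂ)} {ψ : (Fin N → ℂ) → W} {φ : (Fin N → ℂ) → (W →L[ℂ] ℂ)}

theorem IsKZSol.fderiv_pairing_single_eq_zero
    (hdual : ∀ i j ξ w, act' (Equiv.swap i j) ξ w = ξ (act (Equiv.swap i j) w))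
    (hψ : IsKZSol act m U ψ) (hφ : IsKZSol act' (-m) U φ) (hU : IsOpen U)
    {z : Fin N → ℂ} (hz : z ∈ U) (i : Fin N) :
    fderiv ℂ (fun z => φ z (ψ z)) z (Pi.single i 1) = 0 := by
  have hψz := hψ.1.differentiableAt (hU.mem_nhds hz)
  have hφz := hφ.1.differentiableAt (hU.mem_nhds hz)
  rw [fderiv_clm_apply hφz hψz]
  simp only [add_apply, ContinuousLinearMap.comp_apply, ContinuousLinearMap.flip_apply,
    hψ.2 z hz i, hφ.2 z hz i]
  simp only [map_smul, map_sum, map_add, smul_apply, sum_apply, add_apply, hdual, smul_eq_mul]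
  ring

theorem IsKZSol.fderiv_pairing_eq_zero
    (hdual : ∀ i j ξ w, act' (Equiv.swap i j) ξ w = ξ (act (Equiv.swap i j) w))
    (hψ : IsKZSol act m U ψ) (hφ : IsKZSol act' (-m) U φ) (hU : IsOpen U) :
    U.EqOn (fderiv ℂ (fun z => φ z (ψ z))) 0 := fun _ hz =>
  ContinuousLinearMap.eq_zero_of_apply_single _
    (hψ.fderiv_pairing_single_eq_zero hdual hφ hU hz)

end KZPairing

theorem stmt_4_general {N : ℕ} {W : Type*} [NormedAddCommGroup W]
    [NormedSpace ℂ W] [FiniteDimensional ℂ W]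
    (ρ : Representation ℂ (Equiv.Perm (Fin N)) W) (m : ℂ)
    (U : Set (Fin N → ℂ)) (hUopen : IsOpen U) (hUconn : IsConnected U)
    (ψ : (Fin N → ℂ) → W) (φ : (Fin N → ℂ) → (W →L[ℂ] ℂ))
    (hψ : IsKZSol (fun g w => ρ g w) m U ψ)
    (hφ : IsKZSol
      (fun g ξ => ξ.comp (LinearMap.toContinuousLinearMap (ρ g⁻¹))) (-m) U φ) :
    ∀ z ∈ U, ∀ z' ∈ U, φ z (ψ z) = φ z' (ψ z') := by
  have hdual : ∀ (i j : Fin N) (ξ : W →L[ℂ] ℂ) (w : W),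
      ξ.comp (LinearMap.toContinuousLinearMap (ρ (Equiv.swap i j)⁻¹)) w =
        ξ (ρ (Equiv.swap i j) w) := by
    simp [Equiv.swap_inv]
  intro z hz z' hz'
  exact hUopen.is_const_of_fderiv_eq_zero hUconn.isPreconnected (hφ.1.clm_apply hψ.1)
    (hψ.fderiv_pairing_eq_zero hdual hφ hUopen) hz hz'

/-- if `ψ` solves the KZ equation with values in `W` and parameter
`m` on a connected open `U ⊆ C_N`, and `φ` solves the KZ equation with values in
the dual representation `W*` (where `g` acts on `ξ` by `ξ ∘ ρ(g⁻¹)`) and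
parameter `−m`, then `z ↦ φ(z)(ψ(z))` is constant on `U`. -/
theorem stmt_4 {N : ℕ} (hN : 2 ≤ N) {W : Type*} [NormedAddCommGroup W]
    [NormedSpace ℂ W] [FiniteDimensional ℂ W]
    (ρ : Representation ℂ (Equiv.Perm (Fin N)) W) (m : ℂ)
    (U : Set (Fin N → ℂ)) (hUopen : IsOpen U) (hUconn : IsConnected U)
    (hU : U ⊆ Cconf N)
    (ψ : (Fin N → ℂ) → W) (φ : (Fin N → ℂ) → (W →L[ℂ] ℂ))
    (hψ : IsKZSol (fun g w => ρ g w) m U ψ)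
    (hφ : IsKZSol
      (fun g ξ => ξ.comp (LinearMap.toContinuousLinearMap (ρ g⁻¹))) (-m) U φ) :
    ∀ z ∈ U, ∀ z' ∈ U, φ z (ψ z) = φ z' (ψ z') :=
  stmt_4_general ρ m U hUopen hUconn ψ φ hψ hφ
end
end

section
/- Let ρ : S_N → GL_d(ℂ) be a representation, m an integer, and U ⊆ C_N a connected open set. Suppose Φ : U → M_d(ℂ) is differentiable, Φ(z) is invertible for every z ∈ U, and ∂Φ/∂z_i(z) = m Σ_{j≠i} (ρ(s_{ij}) + I)Φ(z)/(z_i−z_j) for all i. Let d_+ = dim ker(ρ((1 2)) − I) be the dimension of the fixed subspace of a transposition. Then there is a nonzero constant C ∈ ℂ such that det Φ(z) = C ∏_{1≤i<j≤N}(z_i−z_j)^{2 m d_+} for all z ∈ U. -/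
/-!
Along the `i`-th coordinate direction a KZ solution satisfies `∂ᵢΦ = Bᵢ Φ` with
`Bᵢ = m Σ_{j≠i} (ρ(s_ij) + 1)/(z_i - z_j)`, so by Jacobi's formula `∂ᵢ det Φ = tr Bᵢ · det Φ`.
Since `ρ(s_ij)` is an involution and all transpositions are conjugate,
`tr (ρ(s_ij) + 1) = 2 d₊` for every pair `i ≠ j`; hence `det Φ` has the same logarithmic
derivative as `∏_{i<j} (z_i - z_j)^(2 m d₊)`. Their quotient has vanishing derivative on the
connected open set `U`, so it is a constant, nonzero because `Φ` is invertible.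
-/

open scoped BigOperators
open Matrix

open Finset

section Determinant

variable {𝕜 E : Type*} [NontriviallyNormedField 𝕜] [NormedAddCommGroup E] [NormedSpace 𝕜 E]
  {n : Type*} [Fintype n] [DecidableEq n]

def Matrix.detRowContinuousAlternating : (n → 𝕜) [⋀^n]→L[𝕜] 𝕜 :=
  { Matrix.detRowAlternating with cont := continuous_id.matrix_det }

variable {A : E → Matrix n n 𝕜} {x : E}

theorem hasFDerivAt_det {A' : n → n → E →L[𝕜] 𝕜}
    (hA : ∀ a b, HasFDerivAt (fun y => A y a b) (A' a b) x) :
    HasFDerivAt (fun y => (A y).det)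
      ((Matrix.detRowContinuousAlternating (𝕜 := 𝕜) (n := n)).1.linearDeriv (A x) ∘L
        ContinuousLinearMap.pi fun a => ContinuousLinearMap.pi fun b => A' a b) x :=
  (Matrix.detRowContinuousAlternating.hasFDerivAt (A x)).comp x <|
    hasFDerivAt_pi.2 fun a => hasFDerivAt_pi.2 fun b => hA a b

theorem differentiableAt_det (hA : ∀ a b, DifferentiableAt 𝕜 (fun y => A y a b) x) :
    DifferentiableAt 𝕜 (fun y => (A y).det) x :=
  (hasFDerivAt_det fun a b => (hA a b).hasFDerivAt).differentiableAt

theorem fderiv_det_apply (hA : ∀ a b, DifferentiableAt 𝕜 (fun y => A y a b) x) (v : E) :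
    fderiv 𝕜 (fun y => (A y).det) x v =
      ∑ k, ((A x).updateRow k fun b => fderiv 𝕜 (fun y => A y k b) x v).det := by
  rw [(hasFDerivAt_det fun a b => (hA a b).hasFDerivAt).fderiv]
  exact ContinuousMultilinearMap.linearDeriv_apply _ _ _

theorem fderiv_det_apply_eq_trace_mul (hA : ∀ a b, DifferentiableAt 𝕜 (fun y => A y a b) x)
    {v : E} {B : Matrix n n 𝕜} (hB : ∀ a b, fderiv 𝕜 (fun y => A y a b) x v = (B * A x) a b) :
    fderiv 𝕜 (fun y => (A y).det) x v = B.trace * (A x).det := by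
  have hrow : ∀ k, (fun b => fderiv 𝕜 (fun y => A y k b) x v) = ∑ j, B k j • A x j := by
    intro k; ext b; simp [hB, Matrix.mul_apply]
  simp only [fderiv_det_apply hA, hrow, Matrix.det_updateRow_sum, smul_eq_mul, Matrix.trace,
    Matrix.diag, sum_mul]

end Determinant

section DiscriminantPower

theorem sum_filter_lt_sub_div_sub {ι K : Type*} [Fintype ι] [LinearOrder ι] [Field K]
    (v z : ι → K) :
    ∑ p ∈ univ.filter (fun p : ι × ι => p.1 < p.2), (v p.1 - v p.2) / (z p.1 - z p.2) =
      ∑ a, v a * ∑ b ∈ univ.filter (fun b => b ≠ a), (z a - z b)⁻¹ := by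
  have hsplit : ∀ a b,
      (v a - v b) / (z a - z b) = v a * (z a - z b)⁻¹ + v b * (z b - z a)⁻¹ := by
    intro a b
    rw [div_eq_mul_inv, ← neg_sub (z a), inv_neg]
    ring
  simp only [hsplit, sum_add_distrib, sum_filter, mul_sum, Fintype.sum_prod_type]
  rw [sum_comm (f := fun a b => if a < b then v b * (z b - z a)⁻¹ else 0), ← sum_add_distrib]
  refine sum_congr rfl fun a _ => ?_
  rw [← sum_add_distrib]
  refine sum_congr rfl fun b _ => ?_
  rcases lt_trichotomy a b with h | rfl | h
  · simp [h, h.ne', not_lt_of_gt h]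
  · simp
  · simp [h, h.ne, not_lt_of_gt h]

variable {𝕜 : Type*} [NontriviallyNormedField 𝕜]

theorem fderiv_finsetProd_apply_of_eq_mul {E ι : Type*} [NormedAddCommGroup E]
    [NormedSpace 𝕜 E] [DecidableEq ι] {s : Finset ι} {f : ι → E → 𝕜} {c : ι → 𝕜} {x v : E}
    (hf : ∀ i ∈ s, DifferentiableAt 𝕜 (f i) x) (hc : ∀ i ∈ s, fderiv 𝕜 (f i) x v = c i * f i x) :
    fderiv 𝕜 (fun y => ∏ i ∈ s, f i y) x v = (∑ i ∈ s, c i) * ∏ i ∈ s, f i x := by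
  rw [fderiv_finsetProd hf, _root_.sum_apply, sum_mul]
  refine sum_congr rfl fun i hi => ?_
  rw [_root_.smul_apply, hc i hi, smul_eq_mul, ← mul_prod_erase s _ hi]
  ring

variable {ι : Type*} [Fintype ι]

theorem hasFDerivAt_sub_zpow (k : ℤ) {z : ι → 𝕜} {a b : ι} (h : z a ≠ z b) :
    HasFDerivAt (fun y : ι → 𝕜 => (y a - y b) ^ k)
      (((k : 𝕜) * (z a - z b) ^ (k - 1)) •
        (ContinuousLinearMap.proj (R := 𝕜) (φ := fun _ : ι => 𝕜) a - ContinuousLinearMap.proj b))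
      z :=
  (hasDerivAt_zpow k _ (Or.inl (sub_ne_zero.2 h))).comp_hasFDerivAt z
    ((hasFDerivAt_apply a z).fun_sub (hasFDerivAt_apply b z))

theorem fderiv_sub_zpow_apply (k : ℤ) {z : ι → 𝕜} {a b : ι} (h : z a ≠ z b) (v : ι → 𝕜) :
    fderiv 𝕜 (fun y : ι → 𝕜 => (y a - y b) ^ k) z v =
      k * (v a - v b) / (z a - z b) * (z a - z b) ^ k := by
  rw [(hasFDerivAt_sub_zpow k h).fderiv, zpow_sub_one₀ (sub_ne_zero.2 h)]
  simp only [_root_.smul_apply, _root_.sub_apply, ContinuousLinearMap.proj_apply, smul_eq_mul]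
  ring

variable [LinearOrder ι]

theorem differentiableAt_prod_sub_zpow (k : ℤ) {z : ι → 𝕜} (hz : Function.Injective z) :
    DifferentiableAt 𝕜 (fun y : ι → 𝕜 =>
      ∏ p ∈ univ.filter (fun p : ι × ι => p.1 < p.2), (y p.1 - y p.2) ^ k) z :=
  (HasFDerivAt.finsetProd fun _ hp =>
    hasFDerivAt_sub_zpow k (hz.ne (mem_filter.1 hp).2.ne)).differentiableAt

theorem fderiv_prod_sub_zpow_apply (k : ℤ) {z : ι → 𝕜} (hz : Function.Injective z)
    (v : ι → 𝕜) :
    fderiv 𝕜 (fun y : ι → 𝕜 =>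
        ∏ p ∈ univ.filter (fun p : ι × ι => p.1 < p.2), (y p.1 - y p.2) ^ k) z v =
      (k * ∑ a, v a * ∑ b ∈ univ.filter (fun b => b ≠ a), (z a - z b)⁻¹) *
        ∏ p ∈ univ.filter (fun p : ι × ι => p.1 < p.2), (z p.1 - z p.2) ^ k := by
  have hne : ∀ p ∈ univ.filter (fun p : ι × ι => p.1 < p.2), z p.1 ≠ z p.2 :=
    fun p hp => hz.ne (mem_filter.1 hp).2.ne
  rw [fderiv_finsetProd_apply_of_eq_mul
    (fun p hp => (hasFDerivAt_sub_zpow k (hne p hp)).differentiableAt)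
    (fun p hp => fderiv_sub_zpow_apply k (hne p hp) v), ← sum_filter_lt_sub_div_sub, mul_sum]
  simp only [mul_div_assoc]

end DiscriminantPower

section Transpositions

variable {K R n N : Type*} [Fintype n] [DecidableEq n]

theorem Matrix.trace_add_one_eq_two_mul_finrank_ker [Field K] (h2 : (2 : K) ≠ 0)
    {g : Matrix n n K} (hg : g * g = 1) :
    (g + 1).trace = 2 * Module.finrank K (LinearMap.ker (Matrix.toLin' (g - 1))) := by
  have hproj : LinearMap.IsProj (LinearMap.ker (Matrix.toLin' (g - 1)))
      (Matrix.toLin' ((2⁻¹ : K) • (g + 1))) := by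
    constructor
    · intro x
      have hzero : (g - 1) * ((2⁻¹ : K) • (g + 1)) = 0 := by
        rw [Matrix.mul_smul, sub_mul, mul_add, mul_add, hg, mul_one, one_mul, mul_one,
          add_comm 1 g, sub_self, smul_zero]
      rw [LinearMap.mem_ker, ← LinearMap.comp_apply, ← Matrix.toLin'_mul, hzero, map_zero,
        LinearMap.zero_apply]
    · intro x hx
      have hgx : g *ᵥ x = x := by
        simpa [Matrix.sub_mulVec, sub_eq_zero] using hx
      rw [Matrix.toLin'_apply, Matrix.smul_mulVec, Matrix.add_mulVec, hgx, Matrix.one_mulVec,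
        ← two_smul K x, smul_smul, inv_mul_cancel₀ h2, one_smul]
  have htrace := hproj.trace
  rw [Matrix.trace_toLin'_eq, Matrix.trace_smul, smul_eq_mul] at htrace
  rw [← htrace, mul_inv_cancel_left₀ h2]

variable [CommRing R]

theorem Matrix.GeneralLinearGroup.trace_eq_of_isConj {u v : GL n R} (h : IsConj u v) :
    (u : Matrix n n R).trace = (v : Matrix n n R).trace := by
  obtain ⟨c, rfl⟩ := isConj_iff.1 h
  exact (Matrix.trace_units_conj c _).symm

variable [DecidableEq N] (ρ : Equiv.Perm N →* GL n R)

theorem trace_map_swap_eq {i j k l : N} (hij : i ≠ j) (hkl : k ≠ l) :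
    (ρ (Equiv.swap i j) : Matrix n n R).trace = (ρ (Equiv.swap k l) : Matrix n n R).trace :=
  Matrix.GeneralLinearGroup.trace_eq_of_isConj (ρ.map_isConj (Equiv.Perm.isConj_swap hij hkl))

theorem map_swap_mul_self (i j : N) :
    (ρ (Equiv.swap i j) : Matrix n n R) * ρ (Equiv.swap i j) = 1 := by
  rw [← Units.val_mul, ← map_mul, Equiv.swap_mul_self, map_one, Units.val_one]

end Transpositions

section KZ

variable {𝕜 : Type*} [NontriviallyNormedField 𝕜] {ι n : Type*} [Fintype ι] [LinearOrder ι]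
  [Fintype n] [DecidableEq n] {Φ : (ι → 𝕜) → Matrix n n 𝕜} {z : ι → 𝕜}

theorem fderiv_det_apply_single_of_kz {i : ι} (m : 𝕜) (R : ι → Matrix n n 𝕜) {t : 𝕜}
    (hR : ∀ j, j ≠ i → (R j).trace = t) (hΦ : ∀ a b, DifferentiableAt 𝕜 (fun y => Φ y a b) z)
    (hKZ : ∀ a b, fderiv 𝕜 (fun y => Φ y a b) z (Pi.single i 1) =
      m * ∑ j ∈ univ.filter (fun j => j ≠ i), (z i - z j)⁻¹ * (R j * Φ z) a b) :
    fderiv 𝕜 (fun y => (Φ y).det) z (Pi.single i 1) =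
      (m * t * ∑ j ∈ univ.filter (fun j => j ≠ i), (z i - z j)⁻¹) * (Φ z).det := by
  rw [fderiv_det_apply_eq_trace_mul hΦ
    (B := m • ∑ j ∈ univ.filter (fun j => j ≠ i), (z i - z j)⁻¹ • R j)]
  · have htr : ∀ j ∈ univ.filter (fun j => j ≠ i),
        ((z i - z j)⁻¹ • R j).trace = (z i - z j)⁻¹ * t :=
      fun j hj => by rw [Matrix.trace_smul, hR j (mem_filter.1 hj).2, smul_eq_mul]
    rw [Matrix.trace_smul, Matrix.trace_sum, sum_congr rfl htr, ← sum_mul, smul_eq_mul]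
    ring
  · intro a b
    simp [hKZ, Matrix.sum_mul, Matrix.sum_apply, mul_sum]

theorem fderiv_det_mul_prod_sub_zpow_eq_zero_of_kz (hz : Function.Injective z) (m t : 𝕜)
    {k : ℤ} (hk : (k : 𝕜) = m * t) (R : ι → ι → Matrix n n 𝕜)
    (hR : ∀ i j, i ≠ j → (R i j).trace = t) (hΦ : ∀ a b, DifferentiableAt 𝕜 (fun y => Φ y a b) z)
    (hKZ : ∀ i a b, fderiv 𝕜 (fun y => Φ y a b) z (Pi.single i 1) =
      m * ∑ j ∈ univ.filter (fun j => j ≠ i), (z i - z j)⁻¹ * (R i j * Φ z) a b) :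
    fderiv 𝕜 (fun y => (Φ y).det *
      ∏ p ∈ univ.filter (fun p : ι × ι => p.1 < p.2), (y p.1 - y p.2) ^ (-k)) z = 0 := by
  refine ContinuousLinearMap.coe_injective ((Pi.basisFun 𝕜 ι).ext fun i => ?_)
  simp only [ContinuousLinearMap.coe_coe, ContinuousLinearMap.toLinearMap_zero,
    LinearMap.zero_apply]
  rw [Pi.basisFun_apply, fderiv_fun_mul (differentiableAt_det hΦ)
    (differentiableAt_prod_sub_zpow _ hz), _root_.add_apply, _root_.smul_apply,
    _root_.smul_apply, fderiv_prod_sub_zpow_apply _ hz,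
    fderiv_det_apply_single_of_kz m (R i) (fun j hj => hR i j hj.symm) hΦ (hKZ i)]
  simp [Pi.single_apply, hk]
  ring

end KZ

/-- an invertible fundamental matrix `Φ` of the KZ system with
integer parameter `m` on a connected open `U ⊆ C_N` has determinant
`det Φ(z) = C ∏_{i<j}(z_i−z_j)^{2 m d₊}` for some nonzero constant `C`,
where `d₊` is the dimension of the fixed subspace of a transposition. -/
theorem stmt_6 {N d : ℕ} (hN : 2 ≤ N)
    (ρ : Equiv.Perm (Fin N) →* Matrix.GeneralLinearGroup (Fin d) ℂ) (m : ℤ)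
    (U : Set (Fin N → ℂ)) (hUopen : IsOpen U) (hUconn : IsConnected U)
    (hU : U ⊆ Cconf N)
    (Φ : (Fin N → ℂ) → Matrix (Fin d) (Fin d) ℂ)
    (hdiff : ∀ a b : Fin d, DifferentiableOn ℂ (fun z => Φ z a b) U)
    (hinv : ∀ z ∈ U, IsUnit (Φ z))
    (hKZ : ∀ z ∈ U, ∀ i : Fin N, ∀ a b : Fin d,
      fderiv ℂ (fun z => Φ z a b) z (Pi.single i 1) =
        (m : ℂ) * ∑ j ∈ Finset.univ.filter (fun j => j ≠ i),
          (z i - z j)⁻¹ *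
            ((((ρ (Equiv.swap i j) : Matrix (Fin d) (Fin d) ℂ) + 1) * Φ z) a b)) :
    ∃ C : ℂ, C ≠ 0 ∧ ∀ z ∈ U,
      (Φ z).det =
        C * ∏ p ∈ Finset.univ.filter (fun p : Fin N × Fin N => p.1 < p.2),
          (z p.1 - z p.2) ^
            (2 * m * (Module.finrank ℂ
              (LinearMap.ker (Matrix.toLin'
                ((ρ (Equiv.swap (⟨0, by omega⟩ : Fin N) (⟨1, by omega⟩ : Fin N)) :
                  Matrix (Fin d) (Fin d) ℂ) - 1))) : ℤ)) := by
  set dp := Module.finrank ℂ (LinearMap.ker (Matrix.toLin'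
    ((ρ (Equiv.swap (⟨0, by omega⟩ : Fin N) (⟨1, by omega⟩ : Fin N)) :
      Matrix (Fin d) (Fin d) ℂ) - 1)))
  set P : (Fin N → ℂ) → ℂ := fun z =>
    ∏ p ∈ univ.filter (fun p : Fin N × Fin N => p.1 < p.2), (z p.1 - z p.2) ^ (-(2 * m * dp : ℤ))
  have htrace : ∀ i j : Fin N, i ≠ j →
      ((ρ (Equiv.swap i j) : Matrix (Fin d) (Fin d) ℂ) + 1).trace = 2 * dp := fun i j hij => by
    rw [Matrix.trace_add, trace_map_swap_eq ρ hij (k := ⟨0, by omega⟩) (l := ⟨1, by omega⟩)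
      (by simp [Fin.ext_iff]), ← Matrix.trace_add,
      Matrix.trace_add_one_eq_two_mul_finrank_ker two_ne_zero (map_swap_mul_self ρ _ _)]
  have hinj : ∀ z ∈ U, Function.Injective z := fun z hz a b hab =>
    by_contra fun hne => hU hz a b hne hab
  have hdiffAt : ∀ z ∈ U, ∀ a b, DifferentiableAt ℂ (fun y => Φ y a b) z := fun z hz a b =>
    (hdiff a b).differentiableAt (hUopen.mem_nhds hz)
  have hconst : ∀ z ∈ U, ∀ w ∈ U, (Φ z).det * P z = (Φ w).det * P w :=
    fun z hz w hw => hUopen.is_const_of_fderiv_eq_zero (f := fun y => (Φ y).det * P y)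
      hUconn.isPreconnected
      (fun y hy => ((differentiableAt_det (hdiffAt y hy)).mul
        (differentiableAt_prod_sub_zpow _ (hinj y hy))).differentiableWithinAt)
      (fun y hy => fderiv_det_mul_prod_sub_zpow_eq_zero_of_kz (hinj y hy) m (2 * dp)
        (k := 2 * m * dp) (by push_cast; ring) _ htrace (hdiffAt y hy) (hKZ y hy)) hz hw
  have hsub_ne : ∀ z ∈ U, ∀ p ∈ univ.filter (fun p : Fin N × Fin N => p.1 < p.2),
      z p.1 - z p.2 ≠ 0 := fun z hz p hp => sub_ne_zero.2 ((hinj z hz).ne (mem_filter.1 hp).2.ne)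
  obtain ⟨z₀, hz₀⟩ := hUconn.nonempty
  refine ⟨(Φ z₀).det * P z₀, mul_ne_zero ((Φ z₀).isUnit_iff_isUnit_det.1 (hinv z₀ hz₀)).ne_zero
    (prod_ne_zero_iff.2 fun p hp => zpow_ne_zero _ (hsub_ne z₀ hz₀ p hp)), fun z hz => ?_⟩
  rw [← hconst z hz z₀ hz₀, mul_assoc, ← prod_mul_distrib,
    prod_eq_one fun p hp => _root_.zpow_neg_mul_zpow_self _ (hsub_ne z hz p hp), mul_one]
end

section
/- (Frobenius formula.) For every vector w in the Specht module W^λ ⊆ V^{⊗N}, the central element Σ_{1≤i<j≤N} s_{ij} of the group algebra of S_N acts by the scalar Σ_{b∈λ}(c(b)−r(b)): that is, Σ_{1≤i<j≤N} s_{ij}·w = (Σ_{b∈λ}(c(b)−r(b))) w, where s_{ij} denotes the transposition (i j) acting on V^{⊗N} by permuting tensor factors. -/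
open scoped BigOperators

noncomputable section

/-- The boxes of the Young diagram `μ`. -/
abbrev Cell (μ : YoungDiagram) : Type := {c : ℕ × ℕ // c ∈ μ.cells}

/-- A numbering of `μ` with `N` boxes: a bijection from the boxes to `{1,…,N}`. -/
abbrev YNumbering (μ : YoungDiagram) (N : ℕ) : Type := Cell μ ≃ Fin N

/-- The number of rows of `μ` (the length of the 0th column). -/
def nRows (μ : YoungDiagram) : ℕ := μ.colLen 0

/-- The row index of a box, as an element of `Fin (nRows μ)`. -/
def rowFin (μ : YoungDiagram) (c : Cell μ) : Fin (nRows μ) :=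
  ⟨c.1.1, by
    have h1 : (c.1.1, c.1.2) ∈ μ := by
      rw [Prod.mk.eta]; exact (YoungDiagram.mem_cells _).mp c.2
    exact lt_of_lt_of_le (YoungDiagram.mem_iff_lt_colLen.mp h1)
      (μ.colLen_anti 0 c.1.2 (Nat.zero_le _))⟩

/-- The weight multi-index `α_T` of a numbering `T`: `α_k` is the row
containing the box `T⁻¹(k)`. -/
def multiIdx (μ : YoungDiagram) {N : ℕ} (T : YNumbering μ N) :
    Fin N → Fin (nRows μ) :=
  fun k => rowFin μ (T.symm k)

/-- The pure tensor `e_T = e_{α_1}⊗…⊗e_{α_N}` associated to a numbering `T`,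
in the model of `V^{⊗N}` (with `V = ℂ^{nRows μ}`) as the space of functions
`(Fin N → Fin (nRows μ)) → ℂ`, where a pure basis tensor is the indicator
function of its multi-index. -/
def eT (μ : YoungDiagram) {N : ℕ} (T : YNumbering μ N) :
    (Fin N → Fin (nRows μ)) → ℂ :=
  fun β => if β = multiIdx μ T then 1 else 0

/-- The column group `C(T)`: permutations preserving the set of entries of
each column of `T`. -/
def colGroup (μ : YoungDiagram) {N : ℕ} (T : YNumbering μ N) :
    Finset (Equiv.Perm (Fin N)) :=
  Finset.univ.filter fun σ =>
    ∀ k : Fin N, ((T.symm (σ k)) : ℕ × ℕ).2 = ((T.symm k) : ℕ × ℕ).2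

/-- `v_T = Σ_{σ ∈ C(T)} sign(σ) e_{σT}` where `σT = σ∘T`. -/
def vT (μ : YoungDiagram) {N : ℕ} (T : YNumbering μ N) :
    (Fin N → Fin (nRows μ)) → ℂ :=
  ∑ σ ∈ colGroup μ T, ((Equiv.Perm.sign σ : ℤ) : ℂ) • eT μ (T.trans σ)

/-- A standard tableau: a numbering increasing from left to right along rows
and from top to bottom along columns. -/
abbrev IsStandard (μ : YoungDiagram) {N : ℕ} (T : YNumbering μ N) : Prop :=
  ∀ c c' : Cell μ,
    ((c.1.1 = c'.1.1 ∧ c.1.2 < c'.1.2) ∨ (c.1.2 = c'.1.2 ∧ c.1.1 < c'.1.1)) →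
      T c < T c'

/-!
Write `v_T = b_T e_T` with `b_T = Σ_{σ ∈ C(T)} sign σ · σ`. The sum of all transpositions is a
class sum, so it commutes with `b_T`, and `Σ_{i ≠ j} s_{ij} v_T = Σ_{i ≠ j} b_T e_{s_{ij} T}`.
If `i` and `j` lie in the same row of `T` then `e_{s_{ij} T} = e_T` and the term is `v_T`; if they
lie in the same column then `s_{ij} ∈ C(T)` and the term is `-v_T`. Otherwise, with `i` in the
higher row, the box `m` in the row of `i` and the column of `j` gives a column transposition
`(m j)` fixing `e_{s_{ij} T}`, so `b_T` kills that tensor. Hence the ordered pairs contribute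
`Σ_b (rowLen (r b) - colLen (c b)) = 2 Σ_b (c(b) - r(b))`, because `Σ_{k < L} (2k + 1) = L²`.
-/

open Finset Equiv

theorem sum_offDiag_eq_two_nsmul_sum_lt {α M : Type*} [Fintype α] [LinearOrder α]
    [AddCommMonoid M] (g : α → α → M) (hg : ∀ a b, g a b = g b a) :
    ∑ p ∈ univ.offDiag, g p.1 p.2 =
      2 • ∑ p ∈ univ.filter (fun p : α × α => p.1 < p.2), g p.1 p.2 := by
  rw [← sum_filter_add_sum_filter_not univ.offDiag (fun p : α × α => p.1 < p.2), two_nsmul]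
  congr 1
  · congr 1
    ext p
    simpa using ne_of_lt
  · refine sum_nbij' Prod.swap Prod.swap ?_ ?_ (fun _ _ => rfl) (fun _ _ => rfl)
      fun p _ => hg _ _ <;> intro p <;> simp <;> grind

theorem sum_offDiag_swap_mul {α M : Type*} [Fintype α] [DecidableEq α] [AddCommMonoid M]
    (σ : Perm α) (f : Perm α → M) :
    ∑ p ∈ univ.offDiag, f (swap p.1 p.2 * σ) = ∑ p ∈ univ.offDiag, f (σ * swap p.1 p.2) := by
  refine sum_nbij' (Prod.map ⇑σ⁻¹ ⇑σ⁻¹) (Prod.map σ σ) (by simp) (by simp) (by simp) (by simp)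
    fun p _ => ?_
  simp only [Prod.map_fst, Prod.map_snd, swap_apply_apply, inv_inv, mul_assoc,
    mul_inv_cancel_left]

theorem Finset.sum_range_two_mul_add_one (n : ℕ) : ∑ k ∈ range n, (2 * k + 1) = n * n := by
  induction n with
  | zero => rfl
  | succ n ih => rw [sum_range_succ, ih]; ring

def rowColSign (c d : ℕ × ℕ) : ℤ :=
  (if c.1 = d.1 then 1 else 0) - (if c.2 = d.2 then 1 else 0)

namespace YoungDiagram

theorem sum_rowLen_fst (μ : YoungDiagram) :
    ∑ c ∈ μ.cells, μ.rowLen c.1 = ∑ c ∈ μ.cells, (2 * c.2 + 1) := by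
  have hfst : ∀ c ∈ μ.cells, c.1 ∈ μ.cells.image Prod.fst := fun c hc => mem_image_of_mem _ hc
  rw [← sum_fiberwise_of_maps_to hfst, ← sum_fiberwise_of_maps_to hfst]
  refine sum_congr rfl fun i _ => ?_
  change ∑ c ∈ μ.row i, _ = ∑ c ∈ μ.row i, _
  simp only [row_eq_prod, sum_product, sum_singleton, sum_const, card_range, smul_eq_mul,
    card_singleton, one_mul, sum_range_two_mul_add_one]

theorem sum_colLen_snd (μ : YoungDiagram) :
    ∑ c ∈ μ.cells, μ.colLen c.2 = ∑ c ∈ μ.cells, (2 * c.1 + 1) := by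
  have h := μ.transpose.sum_rowLen_fst
  rw [show μ.transpose.cells = μ.cells.map (Equiv.prodComm ℕ ℕ).toEmbedding from rfl, sum_map,
    sum_map] at h
  simpa [rowLen_transpose] using h

theorem sum_sum_rowColSign (μ : YoungDiagram) :
    ∑ c ∈ μ.cells, ∑ d ∈ μ.cells, rowColSign c d = 2 * ∑ c ∈ μ.cells, ((c.2 : ℤ) - c.1) := by
  have hrow : ∀ c ∈ μ.cells, ∑ d ∈ μ.cells, (if c.1 = d.1 then 1 else 0 : ℤ) = μ.rowLen c.1 := by
    intro c _
    simp_rw [sum_boole, rowLen_eq_card, row, eq_comm]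
  have hcol : ∀ c ∈ μ.cells, ∑ d ∈ μ.cells, (if c.2 = d.2 then 1 else 0 : ℤ) = μ.colLen c.2 := by
    intro c _
    simp_rw [sum_boole, colLen_eq_card, col, eq_comm]
  simp only [rowColSign, sum_sub_distrib, sum_congr rfl hrow, sum_congr rfl hcol]
  have hr := congrArg (Nat.cast : ℕ → ℤ) μ.sum_rowLen_fst
  have hc := congrArg (Nat.cast : ℕ → ℤ) μ.sum_colLen_snd
  push_cast at hr hc
  rw [hr, hc]
  simp only [sum_add_distrib, ← mul_sum]
  ring

end YoungDiagram

section Specht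

variable {μ : YoungDiagram} {N : ℕ}

/-- `b_T e_{T'}`, where `b_T = Σ_{σ ∈ C(T)} sign σ · σ` is the column antisymmetrizer of `T`. -/
def colAntisymm (T T' : YNumbering μ N) : (Fin N → Fin (nRows μ)) → ℂ :=
  ∑ σ ∈ colGroup μ T, ((Perm.sign σ : ℤ) : ℂ) • eT μ (T'.trans σ)

theorem vT_eq_colAntisymm (T : YNumbering μ N) : vT μ T = colAntisymm T T := rfl

theorem multiIdx_trans (T : YNumbering μ N) (σ : Perm (Fin N)) :
    multiIdx μ (T.trans σ) = multiIdx μ T ∘ σ.symm := rfl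

theorem multiIdx_trans_swap {T : YNumbering μ N} {a b : Fin N}
    (h : multiIdx μ T a = multiIdx μ T b) : multiIdx μ (T.trans (swap a b)) = multiIdx μ T := by
  rw [multiIdx_trans, symm_swap]
  exact funext (apply_swap_eq_self h)

theorem eT_comp (T : YNumbering μ N) (ρ : Perm (Fin N)) :
    (fun β => eT μ T (β ∘ ρ)) = eT μ (T.trans ρ) := by
  funext β
  simp only [eT, multiIdx_trans, eq_comp_symm]

theorem vT_comp (T : YNumbering μ N) (ρ : Perm (Fin N)) :
    (fun β => vT μ T (β ∘ ρ)) =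
      ∑ σ ∈ colGroup μ T, ((Perm.sign σ : ℤ) : ℂ) • eT μ (T.trans (ρ * σ)) := by
  funext β
  rw [vT, Finset.sum_apply, Finset.sum_apply]
  refine sum_congr rfl fun σ _ => ?_
  rw [Pi.smul_apply, Pi.smul_apply, congrFun (eT_comp _ ρ) β, trans_assoc]
  rfl

theorem mem_colGroup_iff {T : YNumbering μ N} {σ : Perm (Fin N)} :
    σ ∈ colGroup μ T ↔ ∀ k, (T.symm (σ k) : ℕ × ℕ).2 = (T.symm k : ℕ × ℕ).2 := by
  simp [colGroup]

theorem mul_mem_colGroup {T : YNumbering μ N} {σ τ : Perm (Fin N)} (hσ : σ ∈ colGroup μ T)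
    (hτ : τ ∈ colGroup μ T) : σ * τ ∈ colGroup μ T :=
  mem_colGroup_iff.2 fun k => (mem_colGroup_iff.1 hσ (τ k)).trans (mem_colGroup_iff.1 hτ k)

theorem inv_mem_colGroup {T : YNumbering μ N} {σ : Perm (Fin N)} (hσ : σ ∈ colGroup μ T) :
    σ⁻¹ ∈ colGroup μ T :=
  mem_colGroup_iff.2 fun k => by simpa using (mem_colGroup_iff.1 hσ (σ⁻¹ k)).symm

theorem swap_mem_colGroup {T : YNumbering μ N} {i j : Fin N}
    (h : (T.symm i : ℕ × ℕ).2 = (T.symm j : ℕ × ℕ).2) : swap i j ∈ colGroup μ T :=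
  mem_colGroup_iff.2 (apply_swap_eq_self (v := fun k => (T.symm k : ℕ × ℕ).2) h)

theorem colAntisymm_congr {T T₁ T₂ : YNumbering μ N} (h : multiIdx μ T₁ = multiIdx μ T₂) :
    colAntisymm T T₁ = colAntisymm T T₂ := by
  have h' : ∀ σ, eT μ (T₁.trans σ) = eT μ (T₂.trans σ) := fun σ => by
    unfold eT
    rw [multiIdx_trans, multiIdx_trans, h]
  simp only [colAntisymm, h']

theorem colAntisymm_trans_of_mem {T : YNumbering μ N} {u : Perm (Fin N)} (hu : u ∈ colGroup μ T)
    (T' : YNumbering μ N) :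
    colAntisymm T (T'.trans u) = ((Perm.sign u : ℤ) : ℂ) • colAntisymm T T' := by
  rw [colAntisymm, colAntisymm, smul_sum]
  refine sum_nbij' (· * u) (· * u⁻¹) (fun σ hσ => mul_mem_colGroup hσ hu)
    (fun σ hσ => mul_mem_colGroup hσ (inv_mem_colGroup hu)) (fun σ _ => by simp)
    (fun σ _ => by simp) fun σ _ => ?_
  rw [smul_smul, Perm.sign_mul, trans_assoc]
  have hu2 : ((Perm.sign u : ℤ) : ℂ) * (Perm.sign u : ℤ) = 1 := by
    rw [← Int.cast_mul, ← Units.val_mul, Int.units_mul_self, Units.val_one, Int.cast_one]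
  congr 2
  push_cast
  linear_combination (-((Perm.sign σ : ℤ) : ℂ)) * hu2

theorem colAntisymm_eq_zero {T T' : YNumbering μ N} {a b : Fin N} (hab : a ≠ b)
    (hcol : swap a b ∈ colGroup μ T) (hrow : multiIdx μ T' a = multiIdx μ T' b) :
    colAntisymm T T' = 0 := by
  have h := colAntisymm_trans_of_mem hcol T'
  rw [colAntisymm_congr (multiIdx_trans_swap hrow), Perm.sign_swap hab] at h
  simpa [self_eq_neg] using h

theorem colAntisymm_trans_swap_eq_zero {T : YNumbering μ N} {i j : Fin N}
    (hrow : (T.symm i : ℕ × ℕ).1 < (T.symm j : ℕ × ℕ).1)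
    (hcol : (T.symm i : ℕ × ℕ).2 ≠ (T.symm j : ℕ × ℕ).2) :
    colAntisymm T (T.trans (swap i j)) = 0 := by
  have hmem : ((T.symm i : ℕ × ℕ).1, (T.symm j : ℕ × ℕ).2) ∈ μ.cells :=
    (μ.mem_cells _).2 (μ.up_left_mem hrow.le le_rfl ((μ.mem_cells _).1 (T.symm j).2))
  set m := T ⟨_, hmem⟩
  have hm : (T.symm m : ℕ × ℕ) = ((T.symm i : ℕ × ℕ).1, (T.symm j : ℕ × ℕ).2) := by
    simp [m]
  have hmj : m ≠ j := fun h => hrow.ne (by rw [← h, hm])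
  have hmi : m ≠ i := fun h => hcol (by rw [← h, hm])
  refine colAntisymm_eq_zero hmj (swap_mem_colGroup (by rw [hm])) (Fin.ext ?_)
  change (T.symm ((swap i j).symm m) : ℕ × ℕ).1 = (T.symm ((swap i j).symm j) : ℕ × ℕ).1
  rw [symm_swap, swap_apply_of_ne_of_ne hmi hmj, swap_apply_right, hm]

theorem colAntisymm_trans_swap (T : YNumbering μ N) {i j : Fin N} (hij : i ≠ j) :
    colAntisymm T (T.trans (swap i j)) = rowColSign (T.symm i) (T.symm j) • vT μ T := by
  have hcell : (T.symm i : ℕ × ℕ) ≠ T.symm j := fun h => hij (T.symm.injective (Subtype.ext h))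
  by_cases hr : (T.symm i : ℕ × ℕ).1 = (T.symm j : ℕ × ℕ).1
  · have hc : (T.symm i : ℕ × ℕ).2 ≠ (T.symm j : ℕ × ℕ).2 := fun hc => hcell (Prod.ext hr hc)
    rw [colAntisymm_congr (multiIdx_trans_swap (Fin.ext hr))]
    simp [rowColSign, hr, hc, vT_eq_colAntisymm]
  by_cases hc : (T.symm i : ℕ × ℕ).2 = (T.symm j : ℕ × ℕ).2
  · rw [colAntisymm_trans_of_mem (swap_mem_colGroup hc), Perm.sign_swap hij]
    simp [rowColSign, hr, hc, vT_eq_colAntisymm]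
  rw [show rowColSign (T.symm i) (T.symm j) = 0 by simp [rowColSign, hr, hc], zero_smul]
  rcases lt_or_gt_of_ne hr with h | h
  · exact colAntisymm_trans_swap_eq_zero h hc
  · rw [swap_comm]
    exact colAntisymm_trans_swap_eq_zero h (Ne.symm hc)

theorem sum_offDiag_rowColSign (T : YNumbering μ N) :
    ∑ p ∈ univ.offDiag, rowColSign (T.symm p.1) (T.symm p.2) =
      ∑ c ∈ μ.cells, ∑ d ∈ μ.cells, rowColSign c d := by
  rw [sum_subset (subset_univ _) fun p _ hp => by
      rw [show p.1 = p.2 by simpa using hp]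
      simp [rowColSign],
    Fintype.sum_prod_type, ← sum_coe_sort μ.cells]
  refine (Equiv.sum_comp T.symm (fun c => ∑ j, rowColSign c (T.symm j))).trans
    (sum_congr rfl fun c _ => ?_)
  rw [← sum_coe_sort μ.cells]
  exact Equiv.sum_comp T.symm (fun d => rowColSign c d)

theorem sum_vT_comp_swap (T : YNumbering μ N) :
    ∑ p ∈ univ.filter (fun p : Fin N × Fin N => p.1 < p.2), (fun β => vT μ T (β ∘ swap p.1 p.2)) =
      ((∑ c ∈ μ.cells, ((c.2 : ℤ) - c.1) : ℤ) : ℂ) • vT μ T := by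
  have hoff : ∑ p ∈ univ.offDiag, (fun β => vT μ T (β ∘ swap p.1 p.2)) =
      (2 * ∑ c ∈ μ.cells, ((c.2 : ℤ) - c.1)) • vT μ T := calc
    _ = ∑ p ∈ univ.offDiag, ∑ σ ∈ colGroup μ T,
          ((Perm.sign σ : ℤ) : ℂ) • eT μ (T.trans (swap p.1 p.2 * σ)) := by
      simp only [vT_comp]
    _ = ∑ p ∈ univ.offDiag, colAntisymm T (T.trans (swap p.1 p.2)) := by
      rw [sum_comm, sum_congr rfl fun σ _ =>
        sum_offDiag_swap_mul σ fun π => ((Perm.sign σ : ℤ) : ℂ) • eT μ (T.trans π), sum_comm]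
      rfl
    _ = ∑ p ∈ univ.offDiag, rowColSign (T.symm p.1) (T.symm p.2) • vT μ T :=
      sum_congr rfl fun p hp => colAntisymm_trans_swap T (mem_offDiag.1 hp).2.2
    _ = _ := by
      rw [← sum_smul, sum_offDiag_rowColSign, YoungDiagram.sum_sum_rowColSign]
  rw [sum_offDiag_eq_two_nsmul_sum_lt (fun i j => fun β => vT μ T (β ∘ swap i j))
    fun i j => by rw [swap_comm], mul_smul, two_zsmul, ← two_nsmul] at hoff
  rw [Int.cast_smul_eq_zsmul]
  exact IsAddTorsionFree.nsmul_right_injective two_ne_zero hoff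

end Specht

theorem stmt_7_general (μ : YoungDiagram) (N : ℕ)
    (w : (Fin N → Fin (nRows μ)) → ℂ)
    (hw : w ∈ Submodule.span ℂ
      {v | ∃ T : YNumbering μ N, IsStandard μ T ∧ v = vT μ T}) :
    (∑ p ∈ Finset.univ.filter (fun p : Fin N × Fin N => p.1 < p.2),
        (fun β => w (β ∘ Equiv.swap p.1 p.2))) =
      ((∑ c ∈ μ.cells, ((c.2 : ℤ) - (c.1 : ℤ)) : ℤ) : ℂ) • w := by
  let L : Module.End ℂ ((Fin N → Fin (nRows μ)) → ℂ) :=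
    ∑ p ∈ univ.filter (fun p : Fin N × Fin N => p.1 < p.2),
      LinearMap.funLeft ℂ ℂ (· ∘ swap p.1 p.2)
  have hL : ∀ v, L v = ∑ p ∈ univ.filter (fun p : Fin N × Fin N => p.1 < p.2),
      (fun β => v (β ∘ swap p.1 p.2)) := fun v => LinearMap.sum_apply _ _ _
  have hspan : Submodule.span ℂ {v | ∃ T : YNumbering μ N, IsStandard μ T ∧ v = vT μ T} ≤
      L.eigenspace ((∑ c ∈ μ.cells, ((c.2 : ℤ) - c.1) : ℤ) : ℂ) := by
    refine Submodule.span_le.2 ?_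
    rintro _ ⟨T, -, rfl⟩
    exact Module.End.mem_eigenspace_iff.2 ((hL _).trans (sum_vT_comp_swap T))
  exact (hL w).symm.trans (Module.End.mem_eigenspace_iff.1 (hspan hw))

/-- Frobenius formula: on the Specht module
`W^λ = span{v_T : T standard}`, the central element `Σ_{i<j} s_{ij}` acts by
the scalar `Σ_{b∈λ}(c(b)−r(b))`. -/
theorem stmt_7 (μ : YoungDiagram) (N : ℕ) (hN : μ.card = N)
    (w : (Fin N → Fin (nRows μ)) → ℂ)
    (hw : w ∈ Submodule.span ℂ
      {v | ∃ T : YNumbering μ N, IsStandard μ T ∧ v = vT μ T}) :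
    (∑ p ∈ Finset.univ.filter (fun p : Fin N × Fin N => p.1 < p.2),
        (fun β => w (β ∘ Equiv.swap p.1 p.2))) =
      ((∑ c ∈ μ.cells, ((c.2 : ℤ) - (c.1 : ℤ)) : ℤ) : ℂ) • w :=
  stmt_7_general μ N w hw
end
end

section
/- For every positive integer m and every integer k with 0 ≤ k ≤ m, the rational numbers (k/m)·binom(m+k−1,k)·binom(2m−k−1,m−k) and ((m−k)/m)·binom(m+k−1,k)·binom(2m−k−1,m−k) are integers. Equivalently, with d_{m,k} = −(1/m)·binom(−m,k)·binom(−m,m−k), the numbers k·d_{m,k} and (m−k)·d_{m,k} are integers for all 0 ≤ k ≤ m. -/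
/-!
Writing `binom(−m, j) = (−1)^j C(m+j−1, j)` turns `d_{m,k}` into `±(1/m) C(m+k−1, k) C(2m−k−1, m−k)`,
and the absorption identity `j C(m+j−1, j) = m C(m+j−1, j−1)` cancels the `1/m` against either
factor `k` (on the first binomial coefficient) or `m − k` (on the second one, as `2m−k−1 = m+(m−k)−1`).
-/

open scoped BigOperators

noncomputable section

/-- The generalized binomial coefficient `binom(−m, k) = (−m)(−m−1)⋯(−m−k+1)/k!`
as a rational number. -/
def negBinomQ (m k : ℕ) : ℚ :=
  (∏ t ∈ Finset.range k, (-(m : ℚ) - t)) / (k.factorial : ℚ)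

/-- The coefficient `d_{m,k} = −(1/m)·binom(−m,k)·binom(−m,m−k)`. -/
def dCoeffQ (m k : ℕ) : ℚ :=
  -(1 / (m : ℚ)) * negBinomQ m k * negBinomQ m (m - k)

theorem negBinomQ_eq (m k : ℕ) :
    negBinomQ m k = (-1) ^ k * ((m + k - 1).choose k : ℚ) := by
  have hprod : ∏ t ∈ Finset.range k, (-(m : ℚ) - t)
      = (-1) ^ k * ((m.ascFactorial k : ℕ) : ℚ) := by
    simp_rw [Nat.ascFactorial_eq_prod_range, Nat.cast_prod, Nat.cast_add, ← neg_add',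
      Finset.prod_neg, Finset.card_range]
  have hfact : (k.factorial : ℚ) ≠ 0 := by exact_mod_cast k.factorial_ne_zero
  rw [negBinomQ, hprod, Nat.ascFactorial_eq_factorial_mul_choose']
  push_cast
  field_simp

theorem dCoeffQ_eq {m k : ℕ} (hk : k ≤ m) :
    dCoeffQ m k = -(-1) ^ m / m * ((m + k - 1).choose k : ℚ) *
      ((2 * m - k - 1).choose (m - k) : ℚ) := by
  have hsign : ((-1 : ℚ)) ^ k * (-1) ^ (m - k) = (-1) ^ m := by
    rw [← pow_add, Nat.add_sub_cancel' hk]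
  rw [dCoeffQ, negBinomQ_eq, negBinomQ_eq, show m + (m - k) - 1 = 2 * m - k - 1 by omega,
    ← hsign]
  ring

theorem exists_int_div_mul_choose (m j : ℕ) :
    ∃ a : ℤ, (j : ℚ) / m * ((m + j - 1).choose j : ℚ) = a := by
  rcases j with _ | j
  · exact ⟨0, by simp⟩
  rcases eq_or_ne m 0 with rfl | hm
  · exact ⟨0, by simp⟩
  refine ⟨(m + j).choose j, ?_⟩
  have habsorb : ((m + j).choose (j + 1) : ℚ) * (j + 1) = (m + j).choose j * m := by
    exact_mod_cast Nat.add_sub_cancel m j ▸ Nat.choose_succ_right_eq (m + j) j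
  rw [show m + (j + 1) - 1 = m + j by omega]
  field_simp
  push_cast
  linear_combination habsorb

theorem stmt_13_general (m k : ℕ) (hk : k ≤ m) :
    (∃ a : ℤ, ((k : ℚ) / (m : ℚ)) * ((m + k - 1).choose k : ℚ) *
      ((2 * m - k - 1).choose (m - k) : ℚ) = (a : ℚ)) ∧
    (∃ a : ℤ, (((m - k : ℕ) : ℚ) / (m : ℚ)) * ((m + k - 1).choose k : ℚ) *
      ((2 * m - k - 1).choose (m - k) : ℚ) = (a : ℚ)) ∧
    (∃ a : ℤ, (k : ℚ) * dCoeffQ m k = (a : ℚ)) ∧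
    (∃ a : ℤ, ((m - k : ℕ) : ℚ) * dCoeffQ m k = (a : ℚ)) := by
  obtain ⟨a, ha⟩ := exists_int_div_mul_choose m k
  obtain ⟨b, hb⟩ := exists_int_div_mul_choose m (m - k)
  rw [show m + (m - k) - 1 = 2 * m - k - 1 by omega] at hb
  refine ⟨⟨a * (2 * m - k - 1).choose (m - k), ?_⟩, ⟨(m + k - 1).choose k * b, ?_⟩,
    ⟨-(-1) ^ m * a * (2 * m - k - 1).choose (m - k), ?_⟩,
    ⟨-(-1) ^ m * (m + k - 1).choose k * b, ?_⟩⟩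
  · push_cast; rw [← ha]
  · push_cast; rw [← hb]; ring
  · push_cast; rw [← ha, dCoeffQ_eq hk]; ring
  · push_cast; rw [← hb, dCoeffQ_eq hk]; ring

/-- for `0 ≤ k ≤ m` the rational numbers
`(k/m)·C(m+k−1,k)·C(2m−k−1,m−k)` and `((m−k)/m)·C(m+k−1,k)·C(2m−k−1,m−k)`
are integers; equivalently `k·d_{m,k}` and `(m−k)·d_{m,k}` are integers. -/
theorem stmt_13 (m k : ℕ) (hm : 0 < m) (hk : k ≤ m) :
    (∃ a : ℤ, ((k : ℚ) / (m : ℚ)) * ((m + k - 1).choose k : ℚ) *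
      ((2 * m - k - 1).choose (m - k) : ℚ) = (a : ℚ)) ∧
    (∃ a : ℤ, (((m - k : ℕ) : ℚ) / (m : ℚ)) * ((m + k - 1).choose k : ℚ) *
      ((2 * m - k - 1).choose (m - k) : ℚ) = (a : ℚ)) ∧
    (∃ a : ℤ, (k : ℚ) * dCoeffQ m k = (a : ℚ)) ∧
    (∃ a : ℤ, ((m - k : ℕ) : ℚ) * dCoeffQ m k = (a : ℚ)) :=
  stmt_13_general m k hk
end
end

section
/- Let w_1,…,w_k be distinct complex numbers, m_1,…,m_k integers, c ∈ ℂ and R > 0 with |c − w_i| ≠ R for all i. Then (1/(2πi)) ∮_{|t−c|=R} ∏_{i=1}^k (t−w_i)^{m_i} dt belongs to the subring of ℂ generated by the integers together with the elements (w_i−w_j) and (w_i−w_j)^{−1} for i ≠ j. In particular it is an integer-coefficient Laurent polynomial expression in the differences w_i−w_j. -/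
/-!
On the circle, which avoids every `w i`, the product `∏ (t - w i) ^ m i` is a linear combination
of `1` and the monomials `(t - w i) ^ n` with coefficients in the ring generated by the
differences `w i - w j` and their inverses: the span of these functions is stable under
multiplication by `t - w i` (write it as `(t - w j) + (w j - w i)`) and by `(t - w i)⁻¹`
(partial fractions `(t - w i)⁻¹ (t - w j)⁻¹ = (w i - w j)⁻¹ ((t - w i)⁻¹ - (t - w j)⁻¹)`).
Each monomial contributes `0` or `1` to `(2πi)⁻¹ ∮`, by the residue computation for
`(t - a) ^ n`.
-/

open Complex Metric Real Set

namespace PartialFraction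

section Algebra

variable {K ι : Type*} [Field K] (w : ι → K) (U : Set K)

def differenceSubring : Subring K :=
  Subring.closure {x | ∃ i j, i ≠ j ∧ (x = w i - w j ∨ x = (w i - w j)⁻¹)}

def laurentMonomial (i : ι) (n : ℤ) : U → K := fun z => ((z : K) - w i) ^ n

def partialFractionSpan : Submodule (differenceSubring w) (U → K) :=
  Submodule.span _ (insert 1 (Set.range fun p : ι × ℤ => laurentMonomial w U p.1 p.2))

variable {w U}

local notation "M" => partialFractionSpan w U

theorem sub_mem_differenceSubring {i j : ι} (hij : i ≠ j) : w i - w j ∈ differenceSubring w :=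
  Subring.subset_closure ⟨i, j, hij, Or.inl rfl⟩

theorem inv_sub_mem_differenceSubring {i j : ι} (hij : i ≠ j) :
    (w i - w j)⁻¹ ∈ differenceSubring w :=
  Subring.subset_closure ⟨i, j, hij, Or.inr rfl⟩

theorem one_mem_partialFractionSpan : (1 : U → K) ∈ M :=
  Submodule.subset_span (Set.mem_insert _ _)

theorem laurentMonomial_mem_partialFractionSpan (i : ι) (n : ℤ) : laurentMonomial w U i n ∈ M :=
  Submodule.subset_span (Set.mem_insert_of_mem _ ⟨(i, n), rfl⟩)

theorem laurentMonomial_zero (i : ι) : laurentMonomial w U i 0 = 1 :=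
  funext fun _ => zpow_zero _

theorem laurentMonomial_add (hU : ∀ z ∈ U, ∀ i, z ≠ w i) (i : ι) (n p : ℤ) :
    laurentMonomial w U i (n + p) = laurentMonomial w U i n * laurentMonomial w U i p :=
  funext fun z => zpow_add₀ (sub_ne_zero.2 (hU z z.2 i)) n p

theorem mul_mem_partialFractionSpan {g : U → K} (hg₁ : g ∈ M)
    (hg : ∀ j p, g * laurentMonomial w U j p ∈ M) {f : U → K} (hf : f ∈ M) : g * f ∈ M := by
  induction hf using Submodule.span_induction with
  | mem x hx =>
    rcases hx with rfl | ⟨⟨j, p⟩, rfl⟩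
    · rwa [mul_one]
    · exact hg j p
  | zero => rw [mul_zero]; exact zero_mem _
  | add x y _ _ hx hy => rw [mul_add]; exact add_mem hx hy
  | smul a x _ hx => rw [mul_smul_comm]; exact Submodule.smul_mem _ _ hx

theorem laurentMonomial_one_mul_mem (hU : ∀ z ∈ U, ∀ i, z ≠ w i) (i : ι) {f : U → K}
    (hf : f ∈ M) : laurentMonomial w U i 1 * f ∈ M := by
  refine mul_mem_partialFractionSpan (laurentMonomial_mem_partialFractionSpan i 1)
    (fun j p => ?_) hf
  rcases eq_or_ne i j with rfl | hij
  · rw [← laurentMonomial_add hU]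
    exact laurentMonomial_mem_partialFractionSpan i _
  have key : laurentMonomial w U i 1 * laurentMonomial w U j p = laurentMonomial w U j (p + 1) +
      (⟨w j - w i, sub_mem_differenceSubring hij.symm⟩ : differenceSubring w) •
        laurentMonomial w U j p := by
    funext z
    simp only [laurentMonomial, Pi.add_apply, Pi.mul_apply, Pi.smul_apply, Subring.smul_def,
      smul_eq_mul, zpow_one, zpow_add_one₀ (sub_ne_zero.2 (hU z z.2 j))]
    ring
  rw [key]
  exact add_mem (laurentMonomial_mem_partialFractionSpan j _)
    (Submodule.smul_mem _ _ (laurentMonomial_mem_partialFractionSpan j p))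

theorem laurentMonomial_neg_one_mul_mem (hU : ∀ z ∈ U, ∀ i, z ≠ w i) (hw : Function.Injective w)
    (i : ι) {f : U → K} (hf : f ∈ M) : laurentMonomial w U i (-1) * f ∈ M := by
  refine mul_mem_partialFractionSpan (laurentMonomial_mem_partialFractionSpan i (-1))
    (fun j p => ?_) hf
  rcases eq_or_ne i j with rfl | hij
  · rw [← laurentMonomial_add hU]
    exact laurentMonomial_mem_partialFractionSpan i _
  have hd : w i - w j ≠ 0 := sub_ne_zero.2 (hw.ne hij)
  induction p with
  | zero =>
    rw [laurentMonomial_zero, mul_one]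
    exact laurentMonomial_mem_partialFractionSpan i _
  | succ p ih =>
    rw [add_comm, laurentMonomial_add hU, mul_left_comm]
    exact laurentMonomial_one_mul_mem hU j ih
  | pred p ih =>
    have key : laurentMonomial w U i (-1) * laurentMonomial w U j (-p - 1) =
        (⟨(w i - w j)⁻¹, inv_sub_mem_differenceSubring hij⟩ : differenceSubring w) •
          (laurentMonomial w U i (-1) * laurentMonomial w U j (-p) -
            laurentMonomial w U j (-p - 1)) := by
      funext z
      have hzi := sub_ne_zero.2 (hU z z.2 i)
      have hzj := sub_ne_zero.2 (hU z z.2 j)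
      simp only [laurentMonomial, Pi.sub_apply, Pi.mul_apply, Pi.smul_apply, Subring.smul_def,
        smul_eq_mul, zpow_sub_one₀ hzj, zpow_neg_one]
      field_simp
      ring
    rw [key]
    exact Submodule.smul_mem _ _ (sub_mem ih (laurentMonomial_mem_partialFractionSpan j _))

theorem laurentMonomial_mul_mem (hU : ∀ z ∈ U, ∀ i, z ≠ w i) (hw : Function.Injective w)
    (i : ι) (n : ℤ) {f : U → K} (hf : f ∈ M) : laurentMonomial w U i n * f ∈ M := by
  induction n with
  | zero => rwa [laurentMonomial_zero, one_mul]
  | succ n ih =>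
    rw [add_comm, laurentMonomial_add hU, mul_assoc]
    exact laurentMonomial_one_mul_mem hU i ih
  | pred n ih =>
    rw [sub_eq_neg_add, laurentMonomial_add hU, mul_assoc]
    exact laurentMonomial_neg_one_mul_mem hU hw i ih

theorem prod_laurentMonomial_mem (hU : ∀ z ∈ U, ∀ i, z ≠ w i) (hw : Function.Injective w)
    (s : Finset ι) (m : ι → ℤ) : ∏ i ∈ s, laurentMonomial w U i (m i) ∈ M := by
  induction s using Finset.cons_induction with
  | empty => exact one_mem_partialFractionSpan
  | cons i s _ ih =>
    rw [Finset.prod_cons]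
    exact laurentMonomial_mul_mem hU hw i (m i) ih

end Algebra

section Integral

variable (S : Subring ℂ) (c : ℂ) (R : ℝ)

def circleIntegralSubmodule : Submodule S (ℂ → ℂ) where
  carrier := {g | CircleIntegrable g c R ∧ (2 * π * I)⁻¹ * (∮ z in C(c, R), g z) ∈ S}
  zero_mem' := ⟨circleIntegrable_const 0 c R, by simp [circleIntegral]⟩
  add_mem' := fun ⟨hf, hfS⟩ ⟨hg, hgS⟩ => ⟨hf.add hg, by
    simp only [Pi.add_apply, circleIntegral.integral_add hf hg, mul_add]
    exact add_mem hfS hgS⟩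
  smul_mem' := fun s f ⟨hf, hfS⟩ => ⟨by simpa [Subring.smul_def] using hf.const_smul (a := (s : ℂ)), by
    simp only [Pi.smul_apply, Subring.smul_def, smul_eq_mul, circleIntegral.integral_const_mul,
      mul_left_comm _ (s : ℂ)]
    exact mul_mem s.2 hfS⟩

variable {S c R}

theorem circleIntegral_sub_zpow_eq_zero_or_one (hR : 0 ≤ R) {a : ℂ} (ha : ‖c - a‖ ≠ R) (n : ℤ) :
    (2 * π * I)⁻¹ * (∮ z in C(c, R), (z - a) ^ n) = 0 ∨
      (2 * π * I)⁻¹ * (∮ z in C(c, R), (z - a) ^ n) = 1 := by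
  rcases ne_or_eq n (-1) with hn | rfl
  · exact Or.inl (by rw [circleIntegral.integral_sub_zpow_of_ne hn, mul_zero])
  simp only [zpow_neg_one]
  rcases ha.lt_or_gt with hin | hout
  · have ha : a ∈ ball c R := by rwa [mem_ball_iff_norm, norm_sub_rev]
    exact Or.inr (by rw [circleIntegral.integral_sub_inv_of_mem_ball ha,
      inv_mul_cancel₀ two_pi_I_ne_zero])
  · have hdiff : DifferentiableOn ℂ (fun z => (z - a)⁻¹) {a}ᶜ := fun z hz =>
      ((differentiableAt_id.sub_const a).inv (sub_ne_zero.2 hz)).differentiableWithinAt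
    have hball : closedBall c R ⊆ {a}ᶜ := by
      rintro z hz rfl
      rw [mem_closedBall_iff_norm, norm_sub_rev] at hz
      exact hz.not_gt hout
    exact Or.inl (by rw [(hdiff.diffContOnCl_ball hball).circleIntegral_eq_zero hR, mul_zero])

theorem sub_zpow_mem_circleIntegralSubmodule (hR : 0 ≤ R) {a : ℂ} (ha : ‖c - a‖ ≠ R) (n : ℤ) :
    (fun z => (z - a) ^ n) ∈ circleIntegralSubmodule S c R := by
  refine ⟨circleIntegrable_sub_zpow_iff.2 (Or.inr (Or.inr fun h => ha ?_)), ?_⟩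
  · rwa [abs_of_nonneg hR, mem_sphere_iff_norm, norm_sub_rev] at h
  · rcases circleIntegral_sub_zpow_eq_zero_or_one hR ha n with h | h <;> rw [h]
    exacts [zero_mem S, one_mem S]

theorem partialFractionSpan_le_map {ι : Type*} {w : ι → ℂ} (hR : 0 < R) (h : ∀ i, ‖c - w i‖ ≠ R) :
    partialFractionSpan w (sphere c R) ≤ (circleIntegralSubmodule (differenceSubring w) c R).map
      (LinearMap.funLeft _ ℂ Subtype.val) := by
  refine Submodule.span_le.2 ?_
  rintro f (rfl | ⟨⟨j, p⟩, rfl⟩)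
  · refine ⟨fun z => (z - c) ^ (0 : ℤ), sub_zpow_mem_circleIntegralSubmodule hR.le ?_ 0,
      funext fun _ => zpow_zero _⟩
    simpa using hR.ne
  · exact ⟨fun z => (z - w j) ^ p, sub_zpow_mem_circleIntegralSubmodule hR.le (h j) p, rfl⟩

end Integral

end PartialFraction

open PartialFraction in
/-- for distinct `w₁,…,w_k`, integers `m₁,…,m_k`, and a circle
`|t−c| = R` not passing through any `w_i`, the normalized contour integral
`(1/2πi) ∮ ∏ (t−w_i)^{m_i} dt` belongs to the subring of `ℂ` generated by the
differences `w_i−w_j` and their inverses (`i ≠ j`); in particular it is an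
integer-coefficient Laurent polynomial expression in the differences. -/
theorem stmt_16 (k : ℕ) (w : Fin k → ℂ) (hw : Function.Injective w)
    (m : Fin k → ℤ) (c : ℂ) (R : ℝ) (hR : 0 < R)
    (h : ∀ i, ‖c - w i‖ ≠ R) :
    (2 * (Real.pi : ℂ) * Complex.I)⁻¹ *
        (∮ t in C(c, R), ∏ i, (t - w i) ^ (m i)) ∈
      Subring.closure
        {x : ℂ | ∃ i j, i ≠ j ∧ (x = w i - w j ∨ x = (w i - w j)⁻¹)} := by
  have hU : ∀ z ∈ sphere c R, ∀ i, z ≠ w i := fun z hz i hzi =>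
    h i (by rwa [mem_sphere_iff_norm, hzi, norm_sub_rev] at hz)
  obtain ⟨g, ⟨-, hg⟩, hgf⟩ :=
    partialFractionSpan_le_map hR h (prod_laurentMonomial_mem hU hw Finset.univ m)
  have heq : EqOn (fun t => ∏ i, (t - w i) ^ (m i)) g (sphere c R) := fun z hz => by
    simpa [Finset.prod_apply, laurentMonomial] using (congrFun hgf ⟨z, hz⟩).symm
  rwa [circleIntegral.integral_congr hR.le heq]
end
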